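/- Monotonicity of the sPCE bound in the number of contrastive samples: for all L ≥ 1, L_T^sPCE(π, L) ≤ L_T^sPCE(π, L+1). -/
import Mathlib


open Finset
open scoped Classical

noncomputable section

namespace Stmt11


private def snocEquiv (α : Type*) (n : ℕ) : ((Fin n → α) × α) ≃ (Fin (n+1) → α) where
  toFun p := Fin.snoc p.1 p.2
  invFun f := (fun i => f i.castSucc, f (Fin.last n))
  left_inv p := by
    refine Prod.ext ?_ ?_
    · funext i; simp
    · simp
  right_inv f := by
    funext i
    refine Fin.lastCases ?_ ?_ i
    · simp
    · intro j; simp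

private lemma sum_pi_succ {α : Type*} [Fintype α] (n : ℕ) (F : (Fin (n+1) → α) → ℝ) :
    ∑ θs : Fin (n+1) → α, F θs = ∑ g : Fin n → α, ∑ x : α, F (Fin.snoc g x : Fin (n+1) → α) := by
  rw [← Equiv.sum_comp (snocEquiv α n) F, Fintype.sum_prod_type]
  rfl

private lemma sum_prior {Θsp : Type*} [Fintype Θsp] (prior : Θsp → ℝ)
    (hprs : ∑ θ, prior θ = 1) :
    ∀ n : ℕ, ∑ θs : Fin n → Θsp, ∏ i, prior (θs i) = 1
  | 0 => by simp
  | (n+1) => by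
    rw [sum_pi_succ]
    have key : ∀ g : Fin n → Θsp, ∑ x : Θsp, ∏ i : Fin (n+1), prior ((Fin.snoc g x : Fin (n+1) → Θsp) i)
        = ∏ i : Fin n, prior (g i) := by
      intro g
      have : ∀ x : Θsp, ∏ i : Fin (n+1), prior ((Fin.snoc g x : Fin (n+1) → Θsp) i)
          = (∏ i : Fin n, prior (g i)) * prior x := by
        intro x
        rw [Fin.prod_univ_castSucc]
        simp [Fin.snoc_castSucc, Fin.snoc_last]
      rw [Finset.sum_congr rfl fun x _ => this x, ← Finset.mul_sum, hprs, mul_one]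
    rw [Finset.sum_congr rfl fun g _ => key g, sum_prior prior hprs n]

private lemma marginalize_last {Θsp : Type*} [Fintype Θsp] (prior : Θsp → ℝ) (n : ℕ)
    (C : (Fin n → Θsp) → Θsp → ℝ) :
    ∑ θs : Fin (n+1) → Θsp, (∏ i, prior (θs i)) * C (fun i => θs i.castSucc) (θs (Fin.last n))
    = ∑ g : Fin n → Θsp, (∏ i, prior (g i)) * ∑ x, prior x * C g x := by
  rw [sum_pi_succ]
  refine Finset.sum_congr rfl fun g _ => ?_
  rw [Finset.mul_sum]
  refine Finset.sum_congr rfl fun x _ => ?_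
  have h1 : (fun i : Fin n => (Fin.snoc g x : Fin (n+1) → Θsp) i.castSucc) = g := by
    funext i; simp
  rw [Fin.prod_univ_castSucc]
  simp only [Fin.snoc_castSucc, Fin.snoc_last, h1]
  ring

private lemma sym_sum {Θsp Hsp : Type*} [Fintype Θsp] [Fintype Hsp]
    (prior : Θsp → ℝ) (lik : Θsp → Hsp → ℝ) (n : ℕ) (h : Hsp) (j : Fin (n+1)) :
    ∑ θs : Fin (n+1) → Θsp, (∏ i, prior (θs i)) * (lik (θs j) h / ∑ i, lik (θs i) h)
      = ∑ θs : Fin (n+1) → Θsp, (∏ i, prior (θs i)) * (lik (θs 0) h / ∑ i, lik (θs i) h) := by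
  have key := Equiv.sum_comp (Equiv.arrowCongr (Equiv.swap (0 : Fin (n+1)) j) (Equiv.refl Θsp))
      (fun θs : Fin (n+1) → Θsp => (∏ i, prior (θs i)) * (lik (θs j) h / ∑ i, lik (θs i) h))
  rw [← key]
  refine Finset.sum_congr rfl fun θs _ => ?_
  simp only [Equiv.arrowCongr_apply, Equiv.refl_apply, Function.comp, Equiv.symm_swap,
    Equiv.coe_refl, id_eq]
  rw [Equiv.swap_apply_right]
  congr 1
  · exact Equiv.prod_comp (Equiv.swap (0 : Fin (n+1)) j) (fun i => prior (θs i))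
  · congr 1
    exact Equiv.sum_comp (Equiv.swap (0 : Fin (n+1)) j) (fun i => lik (θs i) h)

private lemma sym_value {Θsp Hsp : Type*} [Fintype Θsp] [Fintype Hsp]
    (prior : Θsp → ℝ) (hprs : ∑ θ, prior θ = 1)
    (lik : Θsp → Hsp → ℝ) (hlik : ∀ θ h, 0 < lik θ h)
    (n : ℕ) (h : Hsp) :
    ∑ θs : Fin (n+1) → Θsp, (∏ i, prior (θs i)) * (lik (θs 0) h / ∑ i, lik (θs i) h)
      = 1/((n:ℝ)+1) := by
  have hSpos : ∀ θs : Fin (n+1) → Θsp, 0 < ∑ i, lik (θs i) h :=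
    fun θs => Finset.sum_pos (fun i _ => hlik _ _) ⟨0, Finset.mem_univ _⟩
  have htot : ∑ j : Fin (n+1), ∑ θs : Fin (n+1) → Θsp,
      (∏ i, prior (θs i)) * (lik (θs j) h / ∑ i, lik (θs i) h) = 1 := by
    rw [Finset.sum_comm]
    have key : ∀ θs : Fin (n+1) → Θsp, ∑ j : Fin (n+1),
        (∏ i, prior (θs i)) * (lik (θs j) h / ∑ i, lik (θs i) h)
        = ∏ i, prior (θs i) := by
      intro θs
      rw [← Finset.mul_sum, ← Finset.sum_div, div_self (hSpos θs).ne', mul_one]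
    rw [Finset.sum_congr rfl fun θs _ => key θs, sum_prior prior hprs]
  rw [Finset.sum_congr rfl (fun j _ => sym_sum prior lik n h j), Finset.sum_const,
    Finset.card_univ, Fintype.card_fin, nsmul_eq_mul] at htot
  have hn : ((n:ℝ)+1) ≠ 0 := by positivity
  rw [eq_div_iff hn]
  push_cast at htot
  linarith


/-- The InfoNCE objective
`L_T^NCE(π, U; L) = E_{p(θ_{0:L}) p(h_T|θ₀,π)}
  [log( exp U(h_T,θ₀) / ((1/(L+1)) Σ_{i=0}^L exp U(h_T,θ_i)) )]`,
with `θ₀,...,θ_L` i.i.d. from the prior and `h_T ∼ p(·|θ₀,π)`. -/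
def nce {Θsp Hsp : Type*} [Fintype Θsp] [Fintype Hsp]
    (prior : Θsp → ℝ) (lik : Θsp → Hsp → ℝ) (U : Hsp → Θsp → ℝ) (L : ℕ) : ℝ :=
  ∑ θs : Fin (L+1) → Θsp, (∏ i, prior (θs i)) *
    ∑ h, lik (θs 0) h *
      Real.log (Real.exp (U h (θs 0)) /
        ((1/((L : ℝ)+1)) * ∑ i, Real.exp (U h (θs i))))

/-- The sequential Prior Contrastive Estimation (sPCE) bound
`L_T^sPCE(π, L) = E_{p(θ_{0:L}) p(h_T|θ₀,π)}
  [log( p(h_T|θ₀,π) / ((1/(L+1)) Σ_{ℓ=0}^L p(h_T|θ_ℓ,π)) )]`. -/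
def spce {Θsp Hsp : Type*} [Fintype Θsp] [Fintype Hsp]
    (prior : Θsp → ℝ) (lik : Θsp → Hsp → ℝ) (L : ℕ) : ℝ :=
  ∑ θs : Fin (L+1) → Θsp, (∏ i, prior (θs i)) *
    ∑ h, lik (θs 0) h *
      Real.log (lik (θs 0) h / ((1/((L : ℝ)+1)) * ∑ i, lik (θs i) h))

/-- Monotonicity of the sPCE bound in the number of contrastive samples:
for all `L ≥ 1`, `L_T^sPCE(π, L) ≤ L_T^sPCE(π, L+1)`. -/
theorem spce_monotone
    {Θsp Hsp : Type*} [Fintype Θsp] [Fintype Hsp]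
    (prior : Θsp → ℝ) (lik : Θsp → Hsp → ℝ)
    (hpr : ∀ θ, 0 ≤ prior θ) (hprs : ∑ θ, prior θ = 1)
    (hlik : ∀ θ h, 0 < lik θ h) (hliks : ∀ θ, ∑ h, lik θ h = 1)
    (L : ℕ) (hL : 1 ≤ L) :
    spce prior lik L ≤ spce prior lik (L+1) := by
  classical
  have hLpos : (0:ℝ) < (L:ℝ) + 1 := by positivity
  have hL2pos : (0:ℝ) < (L:ℝ) + 1 + 1 := by positivity
  have hS1pos : ∀ (θs : Fin (L+1+1) → Θsp) (h : Hsp),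
      0 < ∑ i : Fin (L+1), lik (θs i.castSucc) h :=
    fun θs h => Finset.sum_pos (fun i _ => hlik _ _) ⟨0, Finset.mem_univ _⟩
  have hS2pos : ∀ (θs : Fin (L+1+1) → Θsp) (h : Hsp),
      0 < ∑ i : Fin (L+1+1), lik (θs i) h :=
    fun θs h => Finset.sum_pos (fun i _ => hlik _ _) ⟨0, Finset.mem_univ _⟩
  have hPnn : ∀ θs : Fin (L+1+1) → Θsp, 0 ≤ ∏ i, prior (θs i) :=
    fun θs => Finset.prod_nonneg fun i _ => hpr _
  have hPsum : ∑ θs : Fin (L+1+1) → Θsp, ∏ i, prior (θs i) = 1 := sum_prior prior hprs _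
  have hmarg : ∑ h : Hsp, ∑ x : Θsp, prior x * lik x h = 1 := by
    rw [Finset.sum_comm]
    calc ∑ x : Θsp, ∑ h : Hsp, prior x * lik x h
        = ∑ x : Θsp, prior x := by
          refine Finset.sum_congr rfl fun x _ => ?_
          rw [← Finset.mul_sum, hliks, mul_one]
      _ = 1 := hprs
  -- spce (L+1) written explicitly
  have hs2 : spce prior lik (L+1)
      = ∑ θs : Fin (L+1+1) → Θsp, (∏ i, prior (θs i)) *
          ∑ h, lik (θs 0) h * Real.log (lik (θs 0) h /
            ((1/((L:ℝ)+1+1)) * ∑ i : Fin (L+1+1), lik (θs i) h)) := by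
    simp only [spce, Nat.cast_add, Nat.cast_one]
  -- spce L lifted to sums over Fin (L+1+1)
  have hs1 : spce prior lik L
      = ∑ θs : Fin (L+1+1) → Θsp, (∏ i, prior (θs i)) *
          ∑ h, lik (θs 0) h * Real.log (lik (θs 0) h /
            ((1/((L:ℝ)+1)) * ∑ i : Fin (L+1), lik (θs i.castSucc) h)) := by
    have key := marginalize_last prior (L+1)
      (fun g _ => ∑ h, lik (g 0) h * Real.log (lik (g 0) h /
        ((1/((L:ℝ)+1)) * ∑ i : Fin (L+1), lik (g i) h)))
    simp only [Fin.castSucc_zero] at key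
    rw [key, spce]
    refine (Finset.sum_congr rfl fun g _ => ?_).symm
    rw [← Finset.sum_mul, hprs, one_mul]
  -- key quantity: E[X0 * Xlast / S1] = 1/(L+1)
  have hB : ∑ θs : Fin (L+1+1) → Θsp, (∏ i, prior (θs i)) *
      ∑ h, lik (θs 0) h * lik (θs (Fin.last (L+1))) h /
        (∑ i : Fin (L+1), lik (θs i.castSucc) h) = 1/((L:ℝ)+1) := by
    have key := marginalize_last prior (L+1)
      (fun g x => ∑ h, lik (g 0) h * lik x h / (∑ i : Fin (L+1), lik (g i) h))
    simp only [Fin.castSucc_zero] at key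
    rw [key]
    have step : ∀ g : Fin (L+1) → Θsp,
        (∏ i, prior (g i)) * ∑ x, prior x *
            ∑ h, lik (g 0) h * lik x h / (∑ i : Fin (L+1), lik (g i) h)
        = ∑ h, (∑ x, prior x * lik x h) *
            ((∏ i, prior (g i)) * (lik (g 0) h / ∑ i : Fin (L+1), lik (g i) h)) := by
      intro g
      simp only [Finset.mul_sum, Finset.sum_mul]
      rw [Finset.sum_comm]
      refine Finset.sum_congr rfl fun h _ => Finset.sum_congr rfl fun x _ => ?_
      ring
    rw [Finset.sum_congr rfl fun g _ => step g, Finset.sum_comm]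
    have inner : ∀ h : Hsp, ∑ g : Fin (L+1) → Θsp, (∑ x, prior x * lik x h) *
        ((∏ i, prior (g i)) * (lik (g 0) h / ∑ i : Fin (L+1), lik (g i) h))
        = (∑ x, prior x * lik x h) * (1/((L:ℝ)+1)) := by
      intro h
      rw [← Finset.mul_sum, sym_value prior hprs lik hlik L h]
    rw [Finset.sum_congr rfl fun h _ => inner h, ← Finset.sum_mul, hmarg, one_mul]
  -- E[X0 * ratio] = 1
  have hR : ∑ θs : Fin (L+1+1) → Θsp, (∏ i, prior (θs i)) *
      ∑ h, lik (θs 0) h * (((1/((L:ℝ)+1+1)) * ∑ i : Fin (L+1+1), lik (θs i) h) /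
        ((1/((L:ℝ)+1)) * ∑ i : Fin (L+1), lik (θs i.castSucc) h)) = 1 := by
    have point : ∀ (θs : Fin (L+1+1) → Θsp) (h : Hsp),
        lik (θs 0) h * (((1/((L:ℝ)+1+1)) * ∑ i : Fin (L+1+1), lik (θs i) h) /
          ((1/((L:ℝ)+1)) * ∑ i : Fin (L+1), lik (θs i.castSucc) h))
        = (((L:ℝ)+1)/((L:ℝ)+1+1)) * (lik (θs 0) h +
            lik (θs 0) h * lik (θs (Fin.last (L+1))) h /
              (∑ i : Fin (L+1), lik (θs i.castSucc) h)) := by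
      intro θs h
      have hsplit : ∑ i : Fin (L+1+1), lik (θs i) h
          = (∑ i : Fin (L+1), lik (θs i.castSucc) h) + lik (θs (Fin.last (L+1))) h :=
        Fin.sum_univ_castSucc (f := fun i => lik (θs i) h)
      rw [hsplit]
      have h1 := (hS1pos θs h).ne'
      field_simp
    have expand : ∀ θs : Fin (L+1+1) → Θsp,
        (∏ i, prior (θs i)) *
          ∑ h, lik (θs 0) h * (((1/((L:ℝ)+1+1)) * ∑ i : Fin (L+1+1), lik (θs i) h) /
            ((1/((L:ℝ)+1)) * ∑ i : Fin (L+1), lik (θs i.castSucc) h))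
        = (((L:ℝ)+1)/((L:ℝ)+1+1)) * ((∏ i, prior (θs i)) + (∏ i, prior (θs i)) *
            ∑ h, lik (θs 0) h * lik (θs (Fin.last (L+1))) h /
              (∑ i : Fin (L+1), lik (θs i.castSucc) h)) := by
      intro θs
      rw [Finset.sum_congr rfl fun h _ => point θs h, ← Finset.mul_sum,
        Finset.sum_add_distrib, hliks]
      ring
    rw [Finset.sum_congr rfl fun θs _ => expand θs, ← Finset.mul_sum,
      Finset.sum_add_distrib, hPsum, hB]
    field_simp
  -- pointwise log inequality
  have pointlog : ∀ (x a b : ℝ), 0 < x → 0 < a → 0 < b →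
      x * (1 - b/a) ≤ x * (Real.log (x/b) - Real.log (x/a)) := by
    intro x a b hx ha hb
    have h2 : Real.log b - Real.log a ≤ b/a - 1 := by
      have h3 := Real.log_le_sub_one_of_pos (div_pos hb ha)
      rwa [Real.log_div hb.ne' ha.ne'] at h3
    have h4 : Real.log (x/b) - Real.log (x/a) = Real.log a - Real.log b := by
      rw [Real.log_div hx.ne' hb.ne', Real.log_div hx.ne' ha.ne']; ring
    rw [h4]
    have h5 : 1 - b/a ≤ Real.log a - Real.log b := by linarith
    exact mul_le_mul_of_nonneg_left h5 hx.le
  -- pointwise-in-θs inequality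
  have hstep : ∀ θs : Fin (L+1+1) → Θsp,
      (∏ i, prior (θs i)) * (1 -
        ∑ h, lik (θs 0) h * (((1/((L:ℝ)+1+1)) * ∑ i : Fin (L+1+1), lik (θs i) h) /
          ((1/((L:ℝ)+1)) * ∑ i : Fin (L+1), lik (θs i.castSucc) h)))
      ≤ (∏ i, prior (θs i)) *
          ((∑ h, lik (θs 0) h * Real.log (lik (θs 0) h /
              ((1/((L:ℝ)+1+1)) * ∑ i : Fin (L+1+1), lik (θs i) h)))
           - (∑ h, lik (θs 0) h * Real.log (lik (θs 0) h /
              ((1/((L:ℝ)+1)) * ∑ i : Fin (L+1), lik (θs i.castSucc) h)))) := by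
    intro θs
    refine mul_le_mul_of_nonneg_left ?_ (hPnn θs)
    rw [← Finset.sum_sub_distrib]
    have lhs_eq : 1 -
        ∑ h, lik (θs 0) h * (((1/((L:ℝ)+1+1)) * ∑ i : Fin (L+1+1), lik (θs i) h) /
          ((1/((L:ℝ)+1)) * ∑ i : Fin (L+1), lik (θs i.castSucc) h))
        = ∑ h, lik (θs 0) h * (1 -
            (((1/((L:ℝ)+1+1)) * ∑ i : Fin (L+1+1), lik (θs i) h) /
              ((1/((L:ℝ)+1)) * ∑ i : Fin (L+1), lik (θs i.castSucc) h))) := by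
      simp only [mul_sub, mul_one]
      rw [Finset.sum_sub_distrib, hliks]
    rw [lhs_eq]
    refine Finset.sum_le_sum fun h _ => ?_
    have ha : (0:ℝ) < (1/((L:ℝ)+1)) * ∑ i : Fin (L+1), lik (θs i.castSucc) h := by
      have := hS1pos θs h; positivity
    have hb : (0:ℝ) < (1/((L:ℝ)+1+1)) * ∑ i : Fin (L+1+1), lik (θs i) h := by
      have := hS2pos θs h; positivity
    have := pointlog (lik (θs 0) h) _ _ (hlik _ _) ha hb
    calc lik (θs 0) h * (1 -
          (((1/((L:ℝ)+1+1)) * ∑ i : Fin (L+1+1), lik (θs i) h) /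
            ((1/((L:ℝ)+1)) * ∑ i : Fin (L+1), lik (θs i.castSucc) h)))
        ≤ lik (θs 0) h * (Real.log (lik (θs 0) h /
            ((1/((L:ℝ)+1+1)) * ∑ i : Fin (L+1+1), lik (θs i) h))
          - Real.log (lik (θs 0) h /
            ((1/((L:ℝ)+1)) * ∑ i : Fin (L+1), lik (θs i.castSucc) h))) := this
      _ = _ := by ring
  -- assemble
  have total := Finset.sum_le_sum (fun θs (_ : θs ∈ Finset.univ) => hstep θs)
  have lhs_val : ∑ θs : Fin (L+1+1) → Θsp, (∏ i, prior (θs i)) * (1 -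
        ∑ h, lik (θs 0) h * (((1/((L:ℝ)+1+1)) * ∑ i : Fin (L+1+1), lik (θs i) h) /
          ((1/((L:ℝ)+1)) * ∑ i : Fin (L+1), lik (θs i.castSucc) h))) = 0 := by
    simp only [mul_sub, mul_one]
    rw [Finset.sum_sub_distrib, hPsum, hR]
    ring
  have rhs_val : ∑ θs : Fin (L+1+1) → Θsp, (∏ i, prior (θs i)) *
          ((∑ h, lik (θs 0) h * Real.log (lik (θs 0) h /
              ((1/((L:ℝ)+1+1)) * ∑ i : Fin (L+1+1), lik (θs i) h)))
           - (∑ h, lik (θs 0) h * Real.log (lik (θs 0) h /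
              ((1/((L:ℝ)+1)) * ∑ i : Fin (L+1), lik (θs i.castSucc) h))))
      = spce prior lik (L+1) - spce prior lik L := by
    simp only [mul_sub]
    rw [Finset.sum_sub_distrib, ← hs2, ← hs1]
  rw [lhs_val, rhs_val] at total
  linarith


end Stmt11
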